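/- For all z, w in the open unit ball of ℂⁿ with z ≠ 0, one has |z - Φ_z(w)|² ≤ 2(1 - |z|²)/|1 - ⟨z,w⟩|. -/

import Mathlib

open MeasureTheory
open scoped ENNReal

noncomputable section

/-- `ℂⁿ` with the Euclidean (Hermitian) norm. -/
abbrev Cn (n : ℕ) := EuclideanSpace ℂ (Fin n)

/-- Lebesgue volume measure on `ℂⁿ`. -/
instance (n : ℕ) : MeasureSpace (Cn n) :=
  ⟨Measure.map (WithLp.toLp 2) (volume : Measure (Fin n → ℂ))⟩

/-- The open unit ball `𝔹` of `ℂⁿ`. -/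
def ball1 (n : ℕ) : Set (Cn n) := Metric.ball 0 1

/-- `⟨z,w⟩`: the Hermitian inner product in the paper's convention
(linear in `z`, conjugate-linear in `w`); in Mathlib's convention this is `inner w z`. -/
def ip {n : ℕ} (z w : Cn n) : ℂ := inner ℂ w z

/-- The numerator `a - P_a z - s_a Q_a z` of the Möbius automorphism `Φ_a`, where
`P_a z = (⟨z,a⟩/|a|²)a`, `Q_a = I - P_a` and `s_a = √(1-|a|²)`. -/
def numer {n : ℕ} (a z : Cn n) : Cn n :=
  a - ((ip z a) / ((‖a‖ ^ 2 : ℝ) : ℂ)) • a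
    - ((Real.sqrt (1 - ‖a‖ ^ 2) : ℝ) : ℂ) • (z - ((ip z a) / ((‖a‖ ^ 2 : ℝ) : ℂ)) • a)

/-- The involutive Möbius automorphism `Φ_a(z) = (a - P_a z - s_a Q_a z)/(1 - ⟨z,a⟩)`. -/
def phi {n : ℕ} (a z : Cn n) : Cn n := (1 - ip z a)⁻¹ • numer a z

/-!
The vector `(1 - ⟨w,z⟩) z - (z - P_z w - s_z Q_z w)` equals `(1 - |z|²) P_z w + s_z Q_z w`,
since `⟨w,z⟩ z = |z|² P_z w`. Its two summands are orthogonal and `|z| |P_z w| = |⟨w,z⟩|`, so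
Pythagoras gives `|z - Φ_z(w)|² = (1 - |z|²)(|w|² - |⟨w,z⟩|²) / |1 - ⟨w,z⟩|²`. Finally
`|w|² - t² ≤ 1 - t² ≤ 2(1 - t) ≤ 2 |1 - ⟨w,z⟩|` for `t = |⟨w,z⟩|`.
-/

open scoped InnerProductSpace

section Projection

variable {𝕜 E : Type*} [RCLike 𝕜] [NormedAddCommGroup E] [InnerProductSpace 𝕜 E]

theorem norm_sq_smul_starProjection_add_smul_sub (K : Submodule 𝕜 E) [K.HasOrthogonalProjection]
    (a b : 𝕜) (x : E) :
    ‖a • K.starProjection x + b • (x - K.starProjection x)‖ ^ 2 =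
      ‖a‖ ^ 2 * ‖K.starProjection x‖ ^ 2 + ‖b‖ ^ 2 * (‖x‖ ^ 2 - ‖K.starProjection x‖ ^ 2) := by
  have hpyth (a b : 𝕜) : ‖a • K.starProjection x + b • (x - K.starProjection x)‖ ^ 2 =
      ‖a • K.starProjection x‖ ^ 2 + ‖b • (x - K.starProjection x)‖ ^ 2 := by
    have horth : ⟪K.starProjection x, x - K.starProjection x⟫_𝕜 = 0 :=
      inner_eq_zero_symm.mp (K.starProjection_inner_eq_zero x _ (K.starProjection_apply_mem x))
    simp only [sq]
    refine norm_add_sq_eq_norm_sq_add_norm_sq_of_inner_eq_zero (𝕜 := 𝕜) _ _ ?_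
    rw [inner_smul_left, inner_smul_right, horth, mul_zero, mul_zero]
  have hx : ‖x‖ ^ 2 = ‖K.starProjection x‖ ^ 2 + ‖x - K.starProjection x‖ ^ 2 := by
    simpa using hpyth 1 1
  rw [hpyth, norm_smul, norm_smul, mul_pow, mul_pow, hx]
  ring

theorem norm_mul_norm_starProjection_singleton (v w : E) :
    ‖v‖ * ‖(𝕜 ∙ v).starProjection w‖ = ‖⟪v, w⟫_𝕜‖ := by
  have h := congrArg norm (Submodule.smul_starProjection_singleton 𝕜 (v := v) w)
  rw [norm_smul, norm_smul, RCLike.norm_ofReal, abs_of_nonneg (sq_nonneg _)] at h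
  rcases (norm_nonneg v).eq_or_lt with hv | hv
  · have hv0 : v = 0 := norm_eq_zero.mp hv.symm
    simp [hv0]
  · nlinarith

end Projection

theorem sq_sub_sq_le_two_mul_one_sub {x t : ℝ} (hx : x ^ 2 ≤ 1) : x ^ 2 - t ^ 2 ≤ 2 * (1 - t) := by
  nlinarith [sq_nonneg (1 - t)]

section Mobius

variable {n : ℕ}

theorem norm_one_sub_ip_comm (z w : Cn n) : ‖1 - ip z w‖ = ‖1 - ip w z‖ := by
  rw [ip, ip, ← inner_conj_symm, ← RCLike.norm_conj, map_sub, map_one, RCLike.conj_conj]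

theorem numer_eq_starProjection (a z : Cn n) :
    numer a z = a - (ℂ ∙ a).starProjection z
      - ((Real.sqrt (1 - ‖a‖ ^ 2) : ℝ) : ℂ) • (z - (ℂ ∙ a).starProjection z) := by
  rw [Submodule.starProjection_singleton]
  rfl

theorem one_sub_ip_smul_sub_numer (a z : Cn n) :
    (1 - ip z a) • a - numer a z = ((1 - ‖a‖ ^ 2 : ℝ) : ℂ) • (ℂ ∙ a).starProjection z
      + ((Real.sqrt (1 - ‖a‖ ^ 2) : ℝ) : ℂ) • (z - (ℂ ∙ a).starProjection z) := by
  rw [numer_eq_starProjection, sub_smul, one_smul, ip,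
    ← Submodule.smul_starProjection_singleton ℂ]
  push_cast
  module

theorem norm_sq_sub_phi (a z : Cn n) (ha : ‖a‖ ≤ 1) (hd : ip z a ≠ 1) :
    ‖a - phi a z‖ ^ 2 = (1 - ‖a‖ ^ 2) * (‖z‖ ^ 2 - ‖ip z a‖ ^ 2) / ‖1 - ip z a‖ ^ 2 := by
  have hd0 : (1 : ℂ) - ip z a ≠ 0 := sub_ne_zero.mpr (Ne.symm hd)
  have hs : 0 ≤ 1 - ‖a‖ ^ 2 := by nlinarith [norm_nonneg a]
  have hsub : a - phi a z = (1 - ip z a)⁻¹ • ((1 - ip z a) • a - numer a z) := by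
    rw [phi, smul_sub, smul_smul, inv_mul_cancel₀ hd0, one_smul]
  have hproj := norm_mul_norm_starProjection_singleton (𝕜 := ℂ) a z
  rw [hsub, norm_smul, mul_pow, one_sub_ip_smul_sub_numer,
    norm_sq_smul_starProjection_add_smul_sub, Complex.norm_real, Complex.norm_real,
    Real.norm_of_nonneg hs, Real.norm_of_nonneg (Real.sqrt_nonneg _), Real.sq_sqrt hs, ip,
    ← hproj, norm_inv, inv_pow]
  ring

end Mobius

theorem stmt1_general (n : ℕ) (z w : Cn n) (hz : z ∈ ball1 n) (hw : w ∈ ball1 n) :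
    ‖z - phi z w‖ ^ 2 ≤ 2 * (1 - ‖z‖ ^ 2) / ‖1 - ip z w‖ := by
  have hz1 : ‖z‖ < 1 := by simpa [ball1] using hz
  have hw1 : ‖w‖ < 1 := by simpa [ball1] using hw
  have hip : ‖ip w z‖ < 1 := (norm_inner_le_norm z w).trans_lt
    (mul_lt_one_of_nonneg_of_lt_one_left (norm_nonneg _) hz1 hw1.le)
  have hd : 1 - ‖ip w z‖ ≤ ‖1 - ip w z‖ := by simpa using norm_sub_norm_le (1 : ℂ) (ip w z)
  have hd0 : 0 < ‖1 - ip w z‖ := by linarith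
  have hs : 0 ≤ 1 - ‖z‖ ^ 2 := by nlinarith [norm_nonneg z]
  have hw2 : ‖w‖ ^ 2 ≤ 1 := by nlinarith [norm_nonneg w]
  rw [norm_one_sub_ip_comm, norm_sq_sub_phi z w hz1.le (fun h ↦ by simp [h] at hip),
    div_le_div_iff₀ (by positivity) hd0]
  calc (1 - ‖z‖ ^ 2) * (‖w‖ ^ 2 - ‖ip w z‖ ^ 2) * ‖1 - ip w z‖
      ≤ (1 - ‖z‖ ^ 2) * (2 * ‖1 - ip w z‖) * ‖1 - ip w z‖ := by
        gcongr
        exact (sq_sub_sq_le_two_mul_one_sub hw2).trans (by linarith)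
    _ = 2 * (1 - ‖z‖ ^ 2) * ‖1 - ip w z‖ ^ 2 := by ring

theorem stmt1 (n : ℕ) (z w : Cn n) (hz : z ∈ ball1 n) (hw : w ∈ ball1 n) (hz0 : z ≠ 0) :
    ‖z - phi z w‖ ^ 2 ≤ 2 * (1 - ‖z‖ ^ 2) / ‖1 - ip z w‖ :=
  stmt1_general n z w hz hw
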